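/- arXiv:1606.08951 — 3 statements merged into one kernel-verified Lean document; each statement's English description precedes it below -/
import Mathlib

section
/- Let Q = {x ∈ ℝ^n : 0 ≤ x ≤ u, Ax ≥ b} be a nonempty covering polyhedron with bounds (with each component of u a nonnegative integer or +∞). Then the integer hull conv(Q ∩ ℤ^n) is a covering polyhedron with the same bounds: there exist a nonnegative rational matrix A' and nonnegative rational vector b' such that conv(Q ∩ ℤ^n) = {x ∈ ℝ^n : 0 ≤ x ≤ u, A'x ≥ b'}. -/
/-
By Dickson's lemma the integer points of `Q` have finitely many minimal elements `v₁, …, v_K`,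
and since `A ≥ 0` every integer point `y` with `v_k ≤ y ≤ u` lies in `Q`. Hence
`conv (Q ∩ ℤⁿ) = {0 ≤ x ≤ u} ∩ (conv {v_k} + ℝⁿ₊)`: a point `x ≤ u` above `∑ λ_k v_k` splits as
`∑ λ_k y_k` with `v_k ≤ y_k ≤ u`, and the box `[v_k, u]` has integral bounds, so it is the convex
hull of its integer points. The dominant `conv {v_k} + ℝⁿ₊` is the projection of a rational
polyhedron in `(x, λ)`, so Fourier–Motzkin elimination describes it as `{x : A'x ≥ d}` with `A'`
rational; being upward closed it forces `A' ≥ 0`, and on `x ≥ 0` the right-hand side `d` may be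
replaced by `max d 0`.
-/
open Finset

/-- Dot product of two vectors in `ℝ^n`. -/
def dotp {n : ℕ} (c x : Fin n → ℝ) : ℝ := ∑ j, c j * x j

/-- A point of `ℝ^n` is integral if all its coordinates are integers. -/
def isIntPt {n : ℕ} (x : Fin n → ℝ) : Prop := ∀ j, ∃ z : ℤ, x j = (z : ℝ)

/-- The value `sup { cᵀ x : x ∈ S }`, in the extended reals. -/
noncomputable def supVal {n : ℕ} (c : Fin n → ℝ) (S : Set (Fin n → ℝ)) : EReal :=
  ⨆ x ∈ S, ((dotp c x : ℝ) : EReal)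

/-- The value `inf { cᵀ x : x ∈ S }`, in the extended reals. -/
noncomputable def infVal {n : ℕ} (c : Fin n → ℝ) (S : Set (Fin n → ℝ)) : EReal :=
  ⨅ x ∈ S, ((dotp c x : ℝ) : EReal)

/-- The polyhedron `{x ≥ 0 : A x ≤ b}`. -/
def packLP {n m : ℕ} (A : Matrix (Fin m) (Fin n) ℝ) (b : Fin m → ℝ) : Set (Fin n → ℝ) :=
  {x | (∀ j, 0 ≤ x j) ∧ ∀ i, dotp (A i) x ≤ b i}

/-- Aggregation closure of a packing polyhedron. -/
def aggP {n m : ℕ} (A : Matrix (Fin m) (Fin n) ℝ) (b : Fin m → ℝ) : Set (Fin n → ℝ) :=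
  ⋂ lam : {l : Fin m → ℝ // ∀ i, 0 ≤ l i},
    convexHull ℝ {x | (∀ j, 0 ≤ x j) ∧ isIntPt x ∧
      dotp (fun j => ∑ i, lam.1 i * A i j) x ≤ ∑ i, lam.1 i * b i}

/-- 1-row aggregation closure of a packing polyhedron. -/
def oneAggP {n m : ℕ} (A : Matrix (Fin m) (Fin n) ℝ) (b : Fin m → ℝ) : Set (Fin n → ℝ) :=
  ⋂ i : Fin m, convexHull ℝ {x | (∀ j, 0 ≤ x j) ∧ isIntPt x ∧ dotp (A i) x ≤ b i}

/-- Chvátal–Gomory closure of a set `P ⊆ ℝ^n`. -/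
def cgClosure {n : ℕ} (P : Set (Fin n → ℝ)) : Set (Fin n → ℝ) :=
  {x | ∀ (c : Fin n → ℤ) (δ : ℝ),
    (∀ y ∈ P, δ ≤ ∑ j, (c j : ℝ) * y j) → ((⌈δ⌉ : ℤ) : ℝ) ≤ ∑ j, (c j : ℝ) * x j}

/-- 1-row CG closure of a packing polyhedron. -/
def oneCGP {n m : ℕ} (A : Matrix (Fin m) (Fin n) ℝ) (b : Fin m → ℝ) : Set (Fin n → ℝ) :=
  ⋂ i : Fin m, cgClosure {x | (∀ j, 0 ≤ x j) ∧ dotp (A i) x ≤ b i}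

/-- Covering polyhedron with bounds `u j` on coordinates `j ∈ J` (coordinates outside `J`
are unbounded above). -/
def coverLP {n m : ℕ} (A : Matrix (Fin m) (Fin n) ℝ) (b : Fin m → ℝ)
    (J : Finset (Fin n)) (u : Fin n → ℝ) : Set (Fin n → ℝ) :=
  {x | (∀ j, 0 ≤ x j) ∧ (∀ j ∈ J, x j ≤ u j) ∧ ∀ i, b i ≤ dotp (A i) x}

/-- Aggregation closure of a covering polyhedron with bounds. -/
def aggC {n m : ℕ} (A : Matrix (Fin m) (Fin n) ℝ) (b : Fin m → ℝ)
    (J : Finset (Fin n)) (u : Fin n → ℝ) : Set (Fin n → ℝ) :=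
  ⋂ lam : {l : Fin m → ℝ // ∀ i, 0 ≤ l i},
    convexHull ℝ {x | (∀ j, 0 ≤ x j) ∧ isIntPt x ∧ (∀ j ∈ J, x j ≤ u j) ∧
      (∑ i, lam.1 i * b i) ≤ dotp (fun j => ∑ i, lam.1 i * A i j) x}

/-- 1-row aggregation closure of a covering polyhedron with bounds. -/
def oneAggC {n m : ℕ} (A : Matrix (Fin m) (Fin n) ℝ) (b : Fin m → ℝ)
    (J : Finset (Fin n)) (u : Fin n → ℝ) : Set (Fin n → ℝ) :=
  ⋂ i : Fin m, convexHull ℝ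
    {x | (∀ j, 0 ≤ x j) ∧ isIntPt x ∧ (∀ j ∈ J, x j ≤ u j) ∧ b i ≤ dotp (A i) x}

/-- 1-row CG closure of a covering polyhedron with bounds. -/
def oneCGC {n m : ℕ} (A : Matrix (Fin m) (Fin n) ℝ) (b : Fin m → ℝ)
    (J : Finset (Fin n)) (u : Fin n → ℝ) : Set (Fin n → ℝ) :=
  ⋂ i : Fin m, cgClosure {x | (∀ j, 0 ≤ x j) ∧ (∀ j ∈ J, x j ≤ u j) ∧ b i ≤ dotp (A i) x}

theorem exists_between_of_finite {α : Type*} [ConditionallyCompleteLinearOrder α] [Nonempty α]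
    {L U : Set α} (hL : L.Finite) (hU : U.Finite) (h : ∀ l ∈ L, ∀ u ∈ U, l ≤ u) :
    (upperBounds L ∩ lowerBounds U).Nonempty := by
  rcases L.eq_empty_or_nonempty with rfl | hLne
  · obtain ⟨t, ht⟩ := hU.bddBelow
    exact ⟨t, by simp, ht⟩
  rcases U.eq_empty_or_nonempty with rfl | hUne
  · obtain ⟨t, ht⟩ := hL.bddAbove
    exact ⟨t, ht, by simp⟩
  exact exists_between_of_forall_le hLne hUne h

theorem Int.fract_mul_ceil_add_one_sub_fract_mul_floor {R : Type*} [CommRing R] [LinearOrder R]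
    [FloorRing R] [IsOrderedRing R] (a : R) :
    Int.fract a * ⌈a⌉ + (1 - Int.fract a) * ⌊a⌋ = a := by
  have hfloor := Int.floor_add_fract a
  rcases Int.fract_eq_zero_or_add_one_sub_ceil a with h | h
  · rw [h] at hfloor ⊢
    linear_combination hfloor
  · linear_combination (1 - Int.fract a) * hfloor + Int.fract a * h

theorem WellQuasiOrderedLE.exists_finite_basis {α : Type*} [PartialOrder α]
    [WellQuasiOrderedLE α] (T : Set α) :
    ∃ (K : ℕ) (v : Fin K → α), (∀ k, v k ∈ T) ∧ ∀ y ∈ T, ∃ k, v k ≤ y := by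
  have hfin : {z | Minimal (· ∈ T) z}.Finite :=
    WellQuasiOrderedLE.finite_of_isAntichain (setOfPred_minimal_antichain _)
  obtain ⟨K, v, hv⟩ := hfin.fin_embedding
  refine ⟨K, v, fun k => ?_, fun y hy => ?_⟩
  · exact (hv.subset ⟨k, rfl⟩ : Minimal (· ∈ T) (v k)).prop
  · obtain ⟨z, hzy, hz⟩ := exists_minimal_le_of_wellFoundedLT (· ∈ T) y hy
    obtain ⟨k, rfl⟩ := hv.symm.subset hz
    exact ⟨k, hzy⟩

theorem isIntPt.exists_nat_eq {n : ℕ} {x : Fin n → ℝ} (hx : isIntPt x) (hx0 : 0 ≤ x) :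
    ∃ y : Fin n → ℕ, (fun j => (y j : ℝ)) = x := by
  choose z hz using hx
  refine ⟨fun j => (z j).toNat, funext fun j => ?_⟩
  have hz0 : (0 : ℝ) ≤ z j := hz j ▸ hx0 j
  rw [hz j]
  exact_mod_cast Int.toNat_of_nonneg (Int.cast_nonneg_iff.1 hz0)

namespace IntegerHull

variable {k n : ℕ}

theorem exists_forall_nonneg_add_mul_iff {ι : Type*} [Finite ι] (f c : ι → ℝ) :
    (∃ t, ∀ i, 0 ≤ f i + c i * t) ↔
      (∀ i, c i = 0 → 0 ≤ f i) ∧ ∀ p q, 0 < c p → c q < 0 → 0 ≤ -c q * f p + c p * f q := by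
  constructor
  · rintro ⟨t, ht⟩
    refine ⟨fun i hi => by simpa [hi] using ht i, fun p q hp hq => ?_⟩
    nlinarith [mul_nonneg (neg_nonneg.2 hq.le) (ht p), mul_nonneg hp.le (ht q)]
  rintro ⟨hzero, hpair⟩
  obtain ⟨t, hlo, hhi⟩ := exists_between_of_finite
    (Set.toFinite ((fun p => -f p / c p) '' {p | 0 < c p}))
    (Set.toFinite ((fun q => f q / -c q) '' {q | c q < 0})) (by
      rintro _ ⟨p, hp, rfl⟩ _ ⟨q, hq, rfl⟩
      rw [div_le_div_iff₀ hp (neg_pos.2 hq)]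
      nlinarith [hpair p q hp hq])
  refine ⟨t, fun i => ?_⟩
  rcases lt_trichotomy (c i) 0 with hi | hi | hi
  · have := hhi ⟨i, hi, rfl⟩
    rw [le_div_iff₀ (neg_pos.2 hi)] at this
    linarith
  · simpa [hi] using hzero i hi
  · have := hlo ⟨i, hi, rfl⟩
    rw [div_le_iff₀ hi] at this
    linarith

def slack (r : (Fin k → ℚ) × ℚ) (x : Fin k → ℝ) : ℝ :=
  ∑ j, (r.1 j : ℝ) * x j - r.2

@[simp]
theorem slack_zero (x : Fin k → ℝ) : slack 0 x = 0 := by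
  simp [slack]

theorem slack_add_smul (a b : ℚ) (r s : (Fin k → ℚ) × ℚ) (x : Fin k → ℝ) :
    slack (a • r + b • s) x = a * slack r x + b * slack s x := by
  simp only [slack, Prod.fst_add, Prod.snd_add, Prod.smul_fst, Prod.smul_snd, Pi.add_apply,
    Pi.smul_apply, smul_eq_mul, Rat.cast_add, Rat.cast_mul, mul_sub, mul_sum, add_mul,
    sum_add_distrib, mul_assoc]
  ring

def initRow (r : (Fin (k + 1) → ℚ) × ℚ) : (Fin k → ℚ) × ℚ := (Fin.init r.1, r.2)

theorem slack_snoc (r : (Fin (k + 1) → ℚ) × ℚ) (x : Fin k → ℝ) (t : ℝ) :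
    slack r (Fin.snoc x t) = slack (initRow r) x + r.1 (Fin.last k) * t := by
  simp only [slack, Fin.sum_univ_castSucc, Fin.snoc_castSucc, Fin.snoc_last, initRow, Fin.init]
  ring

theorem slack_append {K : ℕ} (a : Fin k → ℚ) (c : Fin K → ℚ) (β : ℚ) (x : Fin k → ℝ)
    (y : Fin K → ℝ) :
    slack (Fin.append a c, β) (Fin.append x y) =
      ∑ j, (a j : ℝ) * x j + ∑ l, (c l : ℝ) * y l - β := by
  simp [slack, Fin.sum_univ_add]

/-- Fourier–Motzkin elimination of the last variable: keep the rows not involving it and add a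
positive combination of each pair of rows bounding it from below and from above. Positions of
`ι ⊕ ι × ι` not of this kind carry the trivial row `0`. -/
def fmStep {ι : Type*} (S : ι → (Fin (k + 1) → ℚ) × ℚ) : ι ⊕ ι × ι → (Fin k → ℚ) × ℚ
  | .inl i => if (S i).1 (Fin.last k) = 0 then initRow (S i) else 0
  | .inr (p, q) =>
    if 0 < (S p).1 (Fin.last k) ∧ (S q).1 (Fin.last k) < 0 then
      (-(S q).1 (Fin.last k)) • initRow (S p) + (S p).1 (Fin.last k) • initRow (S q)
    else 0

theorem forall_slack_fmStep_iff {ι : Type*} [Finite ι] (S : ι → (Fin (k + 1) → ℚ) × ℚ)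
    (x : Fin k → ℝ) :
    (∀ i, 0 ≤ slack (fmStep S i) x) ↔ ∃ t, ∀ i, 0 ≤ slack (S i) (Fin.snoc x t) := by
  simp only [slack_snoc]
  rw [exists_forall_nonneg_add_mul_iff, Sum.forall, Prod.forall]
  refine and_congr (forall_congr' fun i => ?_) (forall₂_congr fun p q => ?_)
  · by_cases h : (S i).1 (Fin.last k) = 0 <;> simp [fmStep, h]
  · rw [Rat.cast_pos, Rat.cast_lt_zero, ← and_imp]
    by_cases h : 0 < (S p).1 (Fin.last k) ∧ (S q).1 (Fin.last k) < 0
    · simp only [fmStep, if_pos h, imp_iff_right h, slack_add_smul, Rat.cast_neg]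
    · simp only [fmStep, if_neg h, slack_zero]
      exact iff_of_true le_rfl (absurd · h)

theorem exists_system_iff_exists_append {K : ℕ} {ι : Type*} [Fintype ι]
    (S : ι → (Fin (k + K) → ℚ) × ℚ) :
    ∃ (m : ℕ) (S' : Fin m → (Fin k → ℚ) × ℚ), ∀ x,
      (∀ i, 0 ≤ slack (S' i) x) ↔ ∃ y : Fin K → ℝ, ∀ i, 0 ≤ slack (S i) (Fin.append x y) := by
  induction K generalizing ι with
  | zero =>
    refine ⟨Fintype.card ι, S ∘ (Fintype.equivFin ι).symm, fun x => ?_⟩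
    rw [(Fintype.equivFin ι).symm.forall_congr_left]
    simp [Unique.exists_iff, Fin.append_right_nil]
  | succ K ih =>
    obtain ⟨m, S', hS'⟩ := ih (fmStep S)
    refine ⟨m, S', fun x => ?_⟩
    simp only [hS', forall_slack_fmStep_iff, ← Fin.append_snoc]
    exact ⟨fun ⟨y, t, h⟩ => ⟨Fin.snoc y t, h⟩,
      fun ⟨y, h⟩ => ⟨Fin.init y, y (Fin.last K), by rwa [Fin.snoc_init_self]⟩⟩

/-- The dominant `conv {v k} + ℝⁿ₊`. -/
def dominant {ι : Type*} [Fintype ι] (v : ι → Fin n → ℝ) : Set (Fin n → ℝ) :=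
  {x | ∃ w ∈ stdSimplex ℝ ι, ∀ j, ∑ k, w k * v k j ≤ x j}

theorem convex_dominant {ι : Type*} [Fintype ι] (v : ι → Fin n → ℝ) :
    Convex ℝ (dominant v) := by
  rintro x ⟨w, hw, hwx⟩ y ⟨w', hw', hwy⟩ a b ha hb hab
  refine ⟨a • w + b • w', convex_stdSimplex ℝ ι hw hw' ha hb hab, fun j => ?_⟩
  simp only [Pi.add_apply, Pi.smul_apply, smul_eq_mul, add_mul, sum_add_distrib, mul_assoc,
    ← mul_sum]
  gcongr
  exacts [hwx j, hwy j]

theorem isUpperSet_dominant {ι : Type*} [Fintype ι] (v : ι → Fin n → ℝ) :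
    IsUpperSet (dominant v) := fun _ _ hxy ⟨w, hw, hwx⟩ => ⟨w, hw, fun j => (hwx j).trans (hxy j)⟩

def dominantSystem {K : ℕ} (v : Fin K → Fin n → ℚ) :
    Fin n ⊕ Fin K ⊕ Bool → (Fin (n + K) → ℚ) × ℚ
  | .inl j => (Fin.append (Pi.single j 1) (fun k => -v k j), 0)
  | .inr (.inl k) => (Fin.append 0 (Pi.single k 1), 0)
  | .inr (.inr true) => (Fin.append 0 1, 1)
  | .inr (.inr false) => (Fin.append 0 (-1), -1)

theorem forall_slack_dominantSystem_iff {K : ℕ} (v : Fin K → Fin n → ℚ) (x : Fin n → ℝ)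
    (w : Fin K → ℝ) :
    (∀ i, 0 ≤ slack (dominantSystem v i) (Fin.append x w)) ↔
      w ∈ stdSimplex ℝ (Fin K) ∧ ∀ j, ∑ k, w k * v k j ≤ x j := by
  simp only [Sum.forall, Bool.forall_bool, dominantSystem, slack_append]
  simp [Pi.single_apply, apply_ite (Rat.cast : ℚ → ℝ), ite_mul, stdSimplex, mul_comm (w _),
    le_antisymm_iff (a := ∑ k, w k), and_comm, and_left_comm, and_assoc]

theorem exists_system_eq_dominant {K : ℕ} (v : Fin K → Fin n → ℚ) :
    ∃ (m : ℕ) (S : Fin m → (Fin n → ℚ) × ℚ),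
      dominant (fun k j => (v k j : ℝ)) = {x | ∀ i, 0 ≤ slack (S i) x} := by
  obtain ⟨m, S, hS⟩ := exists_system_iff_exists_append (dominantSystem v)
  refine ⟨m, S, Set.ext fun x => ((hS x).trans ?_).symm⟩
  simp only [forall_slack_dominantSystem_iff]
  rfl

theorem nonneg_of_forall_nonneg_add_mul {s a : ℝ} (h : ∀ t ≥ 0, 0 ≤ s + t * a) : 0 ≤ a := by
  by_contra! ha
  have hdiv : (|s| + 1) / -a * a = -(|s| + 1) := by
    rw [div_mul_eq_mul_div, div_neg, mul_div_cancel_right₀ _ ha.ne]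
  have := h ((|s| + 1) / -a) (div_nonneg (by positivity) (neg_nonneg.2 ha.le))
  linarith [le_abs_self s]

theorem slack_add_smul_single (r : (Fin k → ℚ) × ℚ) (x : Fin k → ℝ) (j : Fin k)
    (t : ℝ) : slack r (x + t • Pi.single j 1) = slack r x + t * r.1 j := by
  simp only [slack, Pi.add_apply, Pi.smul_apply, Pi.single_apply, smul_eq_mul, mul_ite, mul_one,
    mul_zero, mul_add, sum_add_distrib, sum_ite_eq', mem_univ, ↓reduceIte]
  ring

theorem coeff_nonneg_of_isUpperSet {ι : Type*} {S : ι → (Fin k → ℚ) × ℚ}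
    (hup : IsUpperSet {x | ∀ i, 0 ≤ slack (S i) x})
    (hne : {x | ∀ i, 0 ≤ slack (S i) x}.Nonempty) (i : ι) (j : Fin k) : 0 ≤ (S i).1 j := by
  obtain ⟨x, hx⟩ := hne
  suffices (0 : ℝ) ≤ (S i).1 j by exact_mod_cast this
  refine nonneg_of_forall_nonneg_add_mul (s := slack (S i) x) fun t ht => ?_
  rw [← slack_add_smul_single]
  exact hup (le_add_of_nonneg_right (smul_nonneg ht (Pi.single_nonneg.2 zero_le_one))) hx i

theorem exists_nonneg_system_eq_dominant {K : ℕ} (v : Fin K → Fin n → ℚ) :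
    ∃ (m : ℕ) (S : Fin m → (Fin n → ℚ) × ℚ), (∀ i j, 0 ≤ (S i).1 j) ∧
      dominant (fun k j => (v k j : ℝ)) = {x | ∀ i, 0 ≤ slack (S i) x} := by
  obtain ⟨m, S, hS⟩ := exists_system_eq_dominant v
  rcases (dominant fun k j => (v k j : ℝ)).eq_empty_or_nonempty with h | hne
  · refine ⟨1, fun _ => (0, 1), fun _ _ => le_rfl, h.trans ?_⟩
    norm_num [slack]
  · have hup := isUpperSet_dominant fun k j => (v k j : ℝ)
    rw [hS] at hup hne
    exact ⟨m, S, coeff_nonneg_of_isUpperSet hup hne, hS⟩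

theorem subset_convexHull_isIntPt {S : Set (Fin n → ℝ)}
    (hfloor : ∀ x ∈ S, ∀ j, Function.update x j (⌊x j⌋ : ℝ) ∈ S)
    (hceil : ∀ x ∈ S, ∀ j, Function.update x j (⌈x j⌉ : ℝ) ∈ S) :
    S ⊆ convexHull ℝ {x | x ∈ S ∧ isIntPt x} := by
  suffices key : ∀ F : Finset (Fin n), ∀ x ∈ S, (∀ j ∉ F, ∃ z : ℤ, x j = z) →
      x ∈ convexHull ℝ {x | x ∈ S ∧ isIntPt x} from
    fun x hx => key univ x hx (by simp)
  intro F
  induction F using Finset.induction_on with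
  | empty => exact fun x hx hint => subset_convexHull ℝ _ ⟨hx, fun j => hint j (notMem_empty j)⟩
  | insert j₀ F _ ih =>
    intro x hx hint
    have hround : ∀ z : ℤ, ∀ j ∉ F, ∃ z' : ℤ, Function.update x j₀ (z : ℝ) j = z' := by
      intro z j hj
      rcases eq_or_ne j j₀ with rfl | hne
      · exact ⟨z, by simp⟩
      · rw [Function.update_of_ne hne]
        exact hint j (by simp [hne, hj])
    have hx_eq : x = Int.fract (x j₀) • Function.update x j₀ (⌈x j₀⌉ : ℝ) +
        (1 - Int.fract (x j₀)) • Function.update x j₀ (⌊x j₀⌋ : ℝ) := by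
      ext j
      rcases eq_or_ne j j₀ with rfl | hne
      · simp [Int.fract_mul_ceil_add_one_sub_fract_mul_floor]
      · simp only [Pi.add_apply, Pi.smul_apply, Function.update_of_ne hne, smul_eq_mul]
        ring
    rw [hx_eq]
    exact convex_convexHull ℝ _ (ih _ (hceil x hx j₀) (hround _)) (ih _ (hfloor x hx j₀) (hround _))
      (Int.fract_nonneg _) (sub_nonneg.2 (Int.fract_lt_one _).le) (by ring)

def box (l : Fin n → ℝ) (J : Finset (Fin n)) (u : Fin n → ℝ) : Set (Fin n → ℝ) :=
  {x | l ≤ x ∧ ∀ j ∈ J, x j ≤ u j}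

theorem convex_box (l : Fin n → ℝ) (J : Finset (Fin n)) (u : Fin n → ℝ) :
    Convex ℝ (box l J u) := by
  rintro x ⟨hlx, hxu⟩ y ⟨hly, hyu⟩ a b ha hb hab
  refine ⟨convex_Ici l hlx hly ha hb hab, fun j hj => ?_⟩
  calc a * x j + b * y j ≤ a * u j + b * u j := by gcongr <;> simp_all
    _ = u j := by rw [← add_mul, hab, one_mul]

theorem update_mem_box {l : Fin n → ℝ} {J : Finset (Fin n)} {u x : Fin n → ℝ}
    (hx : x ∈ box l J u) {j : Fin n} {c : ℝ} (hlc : l j ≤ c) (hcu : j ∈ J → c ≤ u j) :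
    Function.update x j c ∈ box l J u := by
  refine ⟨fun i => ?_, fun i hi => ?_⟩ <;> rcases eq_or_ne i j with rfl | hne
  · simpa using hlc
  · simpa [hne] using hx.1 i
  · simpa using hcu hi
  · simpa [hne] using hx.2 i hi

theorem box_subset_convexHull_isIntPt {l : Fin n → ℝ} {J : Finset (Fin n)}
    {u : Fin n → ℝ} (hl : isIntPt l) (hu : ∀ j ∈ J, ∃ z : ℤ, u j = z) :
    box l J u ⊆ convexHull ℝ {x | x ∈ box l J u ∧ isIntPt x} := by
  refine subset_convexHull_isIntPt (fun x hx j => update_mem_box hx ?_ fun hj => ?_)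
    (fun x hx j => update_mem_box hx ?_ fun hj => ?_)
  · obtain ⟨z, hz⟩ := hl j
    rw [hz]
    exact_mod_cast Int.le_floor.2 (hz ▸ hx.1 j)
  · exact (Int.floor_le _).trans (hx.2 j hj)
  · exact (hx.1 j).trans (Int.le_ceil _)
  · obtain ⟨z, hz⟩ := hu j hj
    rw [hz]
    exact_mod_cast Int.ceil_le.2 (hz ▸ hx.2 j hj)

theorem box_subset_coverLP {m : ℕ} {A : Matrix (Fin m) (Fin n) ℝ} {b : Fin m → ℝ}
    {J : Finset (Fin n)} {u v : Fin n → ℝ} (hA : ∀ i j, 0 ≤ A i j) (hv : v ∈ coverLP A b J u) :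
    box v J u ⊆ coverLP A b J u := fun _ ⟨hvx, hxu⟩ =>
  ⟨fun j => (hv.1 j).trans (hvx j), hxu, fun i => (hv.2.2 i).trans <|
    sum_le_sum fun j _ => mul_le_mul_of_nonneg_left (hvx j) (hA i j)⟩

theorem exists_le_le_sum_mul_eq {ι : Type*} [Fintype ι] {w : ι → ℝ} (hw : w ∈ stdSimplex ℝ ι)
    {a : ι → ℝ} {x U : ℝ} (hax : ∑ k, w k * a k ≤ x) (hxU : x ≤ U) (haU : ∀ k, a k ≤ U) :
    ∃ y : ι → ℝ, (∀ k, a k ≤ y k ∧ y k ≤ U) ∧ ∑ k, w k * y k = x := by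
  set c := ∑ k, w k * a k
  set t := (x - c) / (U - c)
  have ht0 : 0 ≤ t := div_nonneg (by linarith) (by linarith)
  have ht1 : t ≤ 1 := div_le_one_of_le₀ (by linarith) (by linarith)
  have htc : t * (U - c) = x - c := by
    rcases eq_or_lt_of_le (show c ≤ U by linarith) with h | h
    -- then `x = c`, and `t = 0` because `_ / 0 = 0`
    · simp [t, show x = c by linarith]
    · exact div_mul_cancel₀ _ (by linarith)
  refine ⟨fun k => a k + t * (U - a k), fun k => ⟨?_, ?_⟩, ?_⟩
  · nlinarith [haU k]
  · nlinarith [haU k]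
  · have : ∑ k, w k * (a k + t * (U - a k)) = (1 - t) * c + t * U * ∑ k, w k := by
      simp only [c, mul_sum, ← sum_add_distrib]
      exact sum_congr rfl fun k _ => by ring
    rw [this, hw.2]
    linarith

theorem convexHull_coverLP_isIntPt_eq {ι : Type*} [Fintype ι] {m : ℕ}
    {A : Matrix (Fin m) (Fin n) ℝ} {b : Fin m → ℝ} {J : Finset (Fin n)} {u : Fin n → ℝ}
    (hA : ∀ i j, 0 ≤ A i j) (hu : ∀ j ∈ J, ∃ z : ℤ, u j = z) (v : ι → Fin n → ℝ)
    (hvint : ∀ k, isIntPt (v k)) (hvQ : ∀ k, v k ∈ coverLP A b J u)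
    (hvle : ∀ x ∈ coverLP A b J u, isIntPt x → ∃ k, v k ≤ x) :
    convexHull ℝ {x | x ∈ coverLP A b J u ∧ isIntPt x} = box 0 J u ∩ dominant v := by
  apply subset_antisymm
  · refine convexHull_min ?_ ((convex_box 0 J u).inter (convex_dominant v))
    rintro x ⟨hxQ, hxint⟩
    obtain ⟨k, hk⟩ := hvle x hxQ hxint
    classical
    exact ⟨⟨hxQ.1, hxQ.2.1⟩, Pi.single k 1, single_mem_stdSimplex ℝ k,
      fun j => by simpa [Pi.single_apply] using hk j⟩
  rintro x ⟨⟨hx0, hxu⟩, w, hw, hwx⟩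
  have hsplit : ∀ j, ∃ y : ι → ℝ,
      (∀ k, v k j ≤ y k) ∧ (j ∈ J → ∀ k, y k ≤ u j) ∧ ∑ k, w k * y k = x j := by
    intro j
    by_cases hj : j ∈ J
    · obtain ⟨y, hy, hyx⟩ :=
        exists_le_le_sum_mul_eq hw (hwx j) (hxu j hj) fun k => (hvQ k).2.1 j hj
      exact ⟨y, fun k => (hy k).1, fun _ k => (hy k).2, hyx⟩
    · refine ⟨fun k => v k j + (x j - ∑ l, w l * v l j),
        fun k => le_add_of_nonneg_right (sub_nonneg.2 (hwx j)), fun h => absurd h hj, ?_⟩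
      simp [mul_add, sum_add_distrib, ← sum_mul, hw.2]
  choose y hyv hyu hyx using hsplit
  have hmem : ∀ k, (fun j => y j k) ∈ convexHull ℝ {x | x ∈ coverLP A b J u ∧ isIntPt x} :=
    fun k => convexHull_mono
      (Set.ofPred_subset_ofPred.2 fun z hz => ⟨box_subset_coverLP hA (hvQ k) hz.1, hz.2⟩)
      (box_subset_convexHull_isIntPt (hvint k) hu ⟨fun j => hyv j k, fun j hj => hyu j hj k⟩)
  have hx : x = ∑ k, w k • fun j => y j k := by
    ext j
    simp [Finset.sum_apply, hyx]
  rw [hx]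
  exact (convex_convexHull ℝ _).sum_mem (fun k _ => hw.1 k) hw.2 fun k _ => hmem k

theorem box_inter_setOf_slack_eq_coverLP {m : ℕ} (S : Fin m → (Fin n → ℚ) × ℚ)
    (hS : ∀ i j, 0 ≤ (S i).1 j) (J : Finset (Fin n)) (u : Fin n → ℝ) :
    box 0 J u ∩ {x | ∀ i, 0 ≤ slack (S i) x} =
      coverLP (fun i j => ((S i).1 j : ℝ)) (fun i => max ((S i).2 : ℝ) 0) J u := by
  ext x
  simp only [box, coverLP, Set.mem_inter_iff, Set.mem_ofPred_eq, slack, dotp, sub_nonneg,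
    and_assoc, Pi.le_def, Pi.zero_apply]
  refine and_congr_right fun hx0 => and_congr_right fun _ => forall_congr' fun i => ?_
  have : 0 ≤ ∑ j, ((S i).1 j : ℝ) * x j :=
    sum_nonneg fun j _ => mul_nonneg (by exact_mod_cast hS i j) (hx0 j)
  rw [max_le_iff]
  exact (and_iff_left this).symm

end IntegerHull

open IntegerHull

theorem stmt15_general {n m : ℕ} (A : Matrix (Fin m) (Fin n) ℝ) (b : Fin m → ℝ)
    (J : Finset (Fin n)) (u : Fin n → ℝ)
    (hA : ∀ i j, 0 ≤ A i j)
    (hu : ∀ j ∈ J, ∃ z : ℕ, u j = (z : ℝ)) :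
    ∃ (m' : ℕ) (A' : Matrix (Fin m') (Fin n) ℝ) (b' : Fin m' → ℝ),
      (∀ i j, 0 ≤ A' i j) ∧ (∀ i, 0 ≤ b' i) ∧
      (∀ i j, ∃ q : ℚ, A' i j = (q : ℝ)) ∧ (∀ i, ∃ q : ℚ, b' i = (q : ℝ)) ∧
      convexHull ℝ {x | x ∈ coverLP A b J u ∧ isIntPt x} = coverLP A' b' J u := by
  obtain ⟨K, v, hvQ, hvle⟩ := WellQuasiOrderedLE.exists_finite_basis
    {y : Fin n → ℕ | (fun j => (y j : ℝ)) ∈ coverLP A b J u}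
  obtain ⟨m', S, hS0, hS⟩ := exists_nonneg_system_eq_dominant fun k j => (v k j : ℚ)
  simp only [Rat.cast_natCast] at hS
  have hu' : ∀ j ∈ J, ∃ z : ℤ, u j = z := fun j hj => by
    obtain ⟨z, hz⟩ := hu j hj
    exact ⟨z, by simp [hz]⟩
  have hhull := convexHull_coverLP_isIntPt_eq hA hu' (fun k j => (v k j : ℝ))
    (fun k j => ⟨v k j, by simp⟩) hvQ fun x hxQ hxint => by
      obtain ⟨y, rfl⟩ := hxint.exists_nat_eq hxQ.1
      obtain ⟨k, hk⟩ := hvle y hxQ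
      exact ⟨k, fun j => Nat.cast_le.2 (hk j)⟩
  refine ⟨m', fun i j => (S i).1 j, fun i => max ((S i).2 : ℝ) 0,
    fun i j => Rat.cast_nonneg.2 (hS0 i j), fun i => le_max_right _ _, fun i j => ⟨_, rfl⟩,
    fun i => ⟨max (S i).2 0, by simp⟩, ?_⟩
  rw [hhull, hS, box_inter_setOf_slack_eq_coverLP S hS0]

/-- The integer hull of a nonempty covering polyhedron with bounds
`Q = {x : 0 ≤ x ≤ u, Ax ≥ b}` (bounds imposed on coordinates in `J`) is again a covering
polyhedron with the same bounds. -/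
theorem stmt15 {n m : ℕ} (A : Matrix (Fin m) (Fin n) ℝ) (b : Fin m → ℝ)
    (J : Finset (Fin n)) (u : Fin n → ℝ)
    (hA : ∀ i j, 0 ≤ A i j) (hb : ∀ i, 0 ≤ b i)
    (hAq : ∀ i j, ∃ q : ℚ, A i j = (q : ℝ)) (hbq : ∀ i, ∃ q : ℚ, b i = (q : ℝ))
    (hu : ∀ j ∈ J, ∃ z : ℕ, u j = (z : ℝ))
    (hne : (coverLP A b J u).Nonempty) :
    ∃ (m' : ℕ) (A' : Matrix (Fin m') (Fin n) ℝ) (b' : Fin m' → ℝ),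
      (∀ i j, 0 ≤ A' i j) ∧ (∀ i, 0 ≤ b' i) ∧
      (∀ i j, ∃ q : ℚ, A' i j = (q : ℝ)) ∧ (∀ i, ∃ q : ℚ, b' i = (q : ℝ)) ∧
      convexHull ℝ {x | x ∈ coverLP A b J u ∧ isIntPt x} = coverLP A' b' J u :=
  stmt15_general A b J u hA hu
end

section
/- Let {Q^i}_{i ∈ I} be a (possibly infinite) family of covering polyhedra with bounds in ℝ^n, all having the same upper-bound vector u: Q^i = {x ∈ ℝ^n : 0 ≤ x ≤ u, G(i)x ≥ g(i)} with each G(i), g(i) nonnegative. Then ⋂_{i ∈ I} (Q^i + ℝ^n_+) = (⋂_{i ∈ I} Q^i) + ℝ^n_+, where ℝ^n_+ = {x ∈ ℝ^n : x ≥ 0} and + denotes Minkowski sum. -/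
open Finset Pointwise

/-- Let `{Qⁱ}_{i ∈ ι}` be a family of covering polyhedra with bounds, all
with the same upper bounds (`u j` for `j ∈ J`).  Then intersecting commutes with adding the
nonnegative orthant: `⋂ᵢ (Qⁱ + ℝ^n_+) = (⋂ᵢ Qⁱ) + ℝ^n_+`. -/
theorem stmt16 {n : ℕ} {ι : Type*} (m : ι → ℕ)
    (G : ∀ i, Matrix (Fin (m i)) (Fin n) ℝ) (g : ∀ i, Fin (m i) → ℝ)
    (J : Finset (Fin n)) (u : Fin n → ℝ)
    (hG : ∀ i r j, 0 ≤ G i r j) (hg : ∀ i r, 0 ≤ g i r)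
    (hu : ∀ j ∈ J, ∃ z : ℕ, u j = (z : ℝ)) :
    ⋂ i, (coverLP (G i) (g i) J u + {y : Fin n → ℝ | ∀ j, 0 ≤ y j})
      = (⋂ i, coverLP (G i) (g i) J u) + {y : Fin n → ℝ | ∀ j, 0 ≤ y j} := by
  ext x
  simp only [Set.mem_iInter]
  constructor
  · intro hx
    cases isEmpty_or_nonempty ι with
    | inl h =>
      exact ⟨x, Set.mem_iInter.mpr (fun i => (h.false i).elim), 0, fun j => le_refl 0,
        by simp⟩
    | inr h =>
      set z : Fin n → ℝ := fun j => if j ∈ J then min (x j) (u j) else x j with hz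
      have hzle : ∀ j, z j ≤ x j := by
        intro j
        simp only [hz]
        split
        · exact min_le_left _ _
        · exact le_refl _
      have hzmem : ∀ i, z ∈ coverLP (G i) (g i) J u := by
        intro i
        obtain ⟨q, hq, y, hy, hxy⟩ := hx i
        have hqx : ∀ j, q j ≤ x j := by
          intro j
          have : x j = q j + y j := by rw [← hxy]; rfl
          rw [this]
          linarith [hy j]
        have hqz : ∀ j, q j ≤ z j := by
          intro j
          simp only [hz]
          split
          · next hj => exact le_min (hqx j) (hq.2.1 j hj)
          · exact hqx j
        refine ⟨?_, ?_, ?_⟩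
        · intro j
          exact le_trans (hq.1 j) (hqz j)
        · intro j hj
          simp only [hz, if_pos hj]
          exact min_le_right _ _
        · intro r
          refine le_trans (hq.2.2 r) ?_
          unfold dotp
          apply Finset.sum_le_sum
          intro j _
          exact mul_le_mul_of_nonneg_left (hqz j) (hG i r j)
      refine ⟨z, Set.mem_iInter.mpr hzmem, x - z, ?_, by simp⟩
      intro j
      have := hzle j
      simp only [Pi.sub_apply]
      linarith
  · rintro ⟨q, hq, y, hy, hxy⟩ i
    exact ⟨q, Set.mem_iInter.mp hq i, y, hy, hxy⟩
end

section
/- Let Q = {x ∈ ℝ^n : 0 ≤ x ≤ u, Ax ≥ b} be a covering polyhedron with bounds. Then the knapsack-cover closure KC(Q) is a 2-approximation of the aggregation closure 𝒜(Q): for every c ∈ ℝ^n with c ≥ 0, inf{cᵀx : x ∈ KC(Q)} ≥ (1/2)·inf{cᵀx : x ∈ 𝒜(Q)}. -/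
open Finset

/-- The knapsack-cover (KC) closure of a covering polyhedron with bounds: all points of the
polyhedron satisfying, for every row `i` and every `S ⊆ J` with
`r = b i - ∑_{j ∈ S} A i j * u j > 0`, the inequality `∑_{j ∉ S} min(A i j, r) · x j ≥ r`. -/
def kcClosure {n m : ℕ} (A : Matrix (Fin m) (Fin n) ℝ) (b : Fin m → ℝ)
    (J : Finset (Fin n)) (u : Fin n → ℝ) : Set (Fin n → ℝ) :=
  {x | x ∈ coverLP A b J u ∧ ∀ (i : Fin m) (S : Finset (Fin n)), S ⊆ J →
    0 < b i - ∑ j ∈ S, A i j * u j →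
    b i - ∑ j ∈ S, A i j * u j
      ≤ ∑ j ∈ Finset.univ \ S, min (A i j) (b i - ∑ j' ∈ S, A i j' * u j') * x j}


/-! For `x ∈ KC(Q)` the point `y = min(2x, u)` costs at most `2 cᵀx` and lies in `𝒜(Q)`.
Nonnegative aggregation of rows preserves KC inequalities, so it suffices to treat one knapsack
row `a z ≥ β`. Let `S` be the coordinates where `y` reaches `u`: the KC inequality for `S`
leaves enough slack that pipage rounding (moving two fractional coordinates along a level set
of the KC left-hand side, and finally rounding the last one) writes `y` as a convex combination
of integral points of `{0 ≤ z ≤ u, a z ≥ β}`. -/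

lemma Convex.mem_of_add_smul_mem {E : Type*} [AddCommGroup E] [Module ℝ E] {C : Set E}
    (hC : Convex ℝ C) {z d : E} {s t : ℝ} (hs : s < 0) (ht : 0 < t)
    (h₁ : z + s • d ∈ C) (h₂ : z + t • d ∈ C) : z ∈ C := by
  have hts : 0 < t - s := by linarith
  convert hC h₁ h₂ (div_nonneg ht.le hts.le) (div_nonneg (neg_nonneg.2 hs.le) hts.le)
    (by field_simp; ring) using 1
  match_scalars <;> field_simp <;> ring

section Pipage

variable {n : ℕ}

open Classical in
noncomputable def fracCoords (z : Fin n → ℝ) : Finset (Fin n) :=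
  univ.filter fun j => ¬ ∃ k : ℤ, z j = k

lemma mem_fracCoords {z : Fin n → ℝ} {j : Fin n} :
    j ∈ fracCoords z ↔ ¬ ∃ k : ℤ, z j = k := by
  simp only [fracCoords, mem_filter, mem_univ, true_and]

lemma isIntPt_iff_fracCoords_eq_empty {z : Fin n → ℝ} : isIntPt z ↔ fracCoords z = ∅ := by
  simp only [isIntPt, eq_empty_iff_forall_notMem, mem_fracCoords, not_not]

lemma floor_lt_and_lt_ceil_of_mem_fracCoords {z : Fin n → ℝ} {j : Fin n}
    (hj : j ∈ fracCoords z) : (⌊z j⌋ : ℝ) < z j ∧ z j < ⌈z j⌉ :=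
  ⟨(Int.floor_le _).lt_of_ne fun h => mem_fracCoords.1 hj ⟨_, h.symm⟩,
    (Int.le_ceil _).lt_of_ne fun h => mem_fracCoords.1 hj ⟨_, h⟩⟩

lemma card_fracCoords_lt {z w : Fin n → ℝ} {l : Fin n} (hl : l ∈ fracCoords z)
    (hwl : ∃ k : ℤ, w l = k) (hw : ∀ j ∉ fracCoords z, w j = z j) :
    #(fracCoords w) < #(fracCoords z) := by
  refine card_lt_card ((ssubset_iff_of_subset fun j hj => ?_).2
    ⟨l, hl, fun h => mem_fracCoords.1 h hwl⟩)
  by_contra hjz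
  rw [mem_fracCoords, hw j hjz] at hj
  exact hjz (mem_fracCoords.2 hj)

lemma dotp_add_smul (g z d : Fin n → ℝ) (t : ℝ) :
    dotp g (z + t • d) = dotp g z + t * dotp g d :=
  (dotProduct_add g z (t • d)).trans (by rw [dotProduct_smul, smul_eq_mul]; rfl)

lemma dotp_single (g : Fin n → ℝ) (k : Fin n) (c : ℝ) : dotp g (Pi.single k c) = g k * c :=
  dotProduct_single g c k

lemma update_eq_add_smul_single (z : Fin n → ℝ) (k : Fin n) (c : ℝ) :
    Function.update z k c = z + (c - z k) • Pi.single k 1 := by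
  funext l
  rcases eq_or_ne l k with rfl | h <;> simp [*]

lemma dotp_update (g z : Fin n → ℝ) (k : Fin n) (c : ℝ) :
    dotp g (Function.update z k c) = dotp g z + (c - z k) * g k := by
  rw [update_eq_add_smul_single, dotp_add_smul, dotp_single, mul_one]

def intBox (lo hi : Fin n → ℤ) : Set (Fin n → ℝ) :=
  {ζ | ∀ j, (lo j : ℝ) ≤ ζ j ∧ ζ j ≤ hi j}

def IsPartialRounding (z w : Fin n → ℝ) : Prop :=
  (∀ j, (⌊z j⌋ : ℝ) ≤ w j ∧ w j ≤ ⌈z j⌉) ∧ #(fracCoords w) < #(fracCoords z)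

lemma IsPartialRounding.mem_intBox {lo hi : Fin n → ℤ} {z w : Fin n → ℝ}
    (h : IsPartialRounding z w) (hz : z ∈ intBox lo hi) : w ∈ intBox lo hi := fun j =>
  ⟨(Int.cast_le.2 (Int.le_floor.2 (hz j).1)).trans (h.1 j).1,
    (h.1 j).2.trans (Int.cast_le.2 (Int.ceil_le.2 (hz j).2))⟩

lemma isPartialRounding_update {z : Fin n → ℝ} {k : Fin n} (hk : k ∈ fracCoords z) {m : ℤ}
    (hm : m = ⌊z k⌋ ∨ m = ⌈z k⌉) : IsPartialRounding z (Function.update z k m) := by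
  have hfc := Int.floor_le_ceil (z k)
  refine ⟨fun j => ?_, card_fracCoords_lt hk ⟨m, by simp⟩ fun j hj => ?_⟩
  · rcases eq_or_ne j k with rfl | hjk
    · rcases hm with rfl | rfl <;> simp [hfc]
    · simp [hjk, Int.floor_le, Int.le_ceil]
  · exact Function.update_of_ne (ne_of_mem_of_not_mem hk hj).symm _ _

lemma mem_convexHull_of_update_floor_ceil {V : Set (Fin n → ℝ)} {z : Fin n → ℝ} {k : Fin n}
    (hk : k ∈ fracCoords z) (hfloor : Function.update z k (⌊z k⌋ : ℝ) ∈ convexHull ℝ V)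
    (hceil : Function.update z k (⌈z k⌉ : ℝ) ∈ convexHull ℝ V) : z ∈ convexHull ℝ V := by
  obtain ⟨h₁, h₂⟩ := floor_lt_and_lt_ceil_of_mem_fracCoords hk
  rw [update_eq_add_smul_single] at hfloor hceil
  exact (convex_convexHull ℝ V).mem_of_add_smul_mem (by linarith) (by linarith) hfloor hceil

def pipageDir (g : Fin n → ℝ) (j k : Fin n) : Fin n → ℝ := Pi.single j (g k) - Pi.single k (g j)

noncomputable def pipageLen (g z : Fin n → ℝ) (j k : Fin n) : ℝ :=
  min ((⌈z j⌉ - z j) / g k) ((z k - ⌊z k⌋) / g j)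

lemma dotp_pipageDir (g : Fin n → ℝ) (j k : Fin n) : dotp g (pipageDir g j k) = 0 := by
  change g ⬝ᵥ (Pi.single j (g k) - Pi.single k (g j)) = 0
  rw [dotProduct_sub, dotProduct_single, dotProduct_single, mul_comm, sub_self]

lemma pipageDir_swap (g : Fin n → ℝ) (j k : Fin n) : pipageDir g k j = -pipageDir g j k :=
  (neg_sub _ _).symm

lemma pipageLen_pos {g z : Fin n → ℝ} {j k : Fin n} (hj : j ∈ fracCoords z)
    (hk : k ∈ fracCoords z) (hgj : 0 < g j) (hgk : 0 < g k) : 0 < pipageLen g z j k := by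
  have := floor_lt_and_lt_ceil_of_mem_fracCoords hj
  have := floor_lt_and_lt_ceil_of_mem_fracCoords hk
  exact lt_min (div_pos (by linarith) hgk) (div_pos (by linarith) hgj)

/-- Moving along `pipageDir` keeps `dotp g` fixed; `pipageLen` is the longest step that keeps
`z j` and `z k` in their cells, so one of them becomes integral. -/
lemma isPartialRounding_pipage {g z : Fin n → ℝ} {j k : Fin n} (hj : j ∈ fracCoords z)
    (hk : k ∈ fracCoords z) (hjk : j ≠ k) (hgj : 0 < g j) (hgk : 0 < g k) :
    IsPartialRounding z (z + pipageLen g z j k • pipageDir g j k) := by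
  set t := pipageLen g z j k
  have ht := pipageLen_pos hj hk hgj hgk
  have htj : t * g k ≤ ⌈z j⌉ - z j := (le_div_iff₀ hgk).1 (min_le_left _ _)
  have htk : t * g j ≤ z k - ⌊z k⌋ := (le_div_iff₀ hgj).1 (min_le_right _ _)
  have hwj : (z + t • pipageDir g j k) j = z j + t * g k := by simp [pipageDir, hjk]
  have hwk : (z + t • pipageDir g j k) k = z k - t * g j := by
    simp [pipageDir, hjk.symm, sub_eq_add_neg]
  have hwl : ∀ l, l ≠ j → l ≠ k → (z + t • pipageDir g j k) l = z l := by
    intro l hlj hlk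
    simp [pipageDir, hlj, hlk]
  refine ⟨fun l => ?_, ?_⟩
  · have hfl := Int.floor_le (z l)
    have hcl := Int.le_ceil (z l)
    by_cases hlj : l = j
    · subst hlj; rw [hwj]; constructor <;> nlinarith
    by_cases hlk : l = k
    · subst hlk; rw [hwk]; constructor <;> nlinarith
    · rw [hwl l hlj hlk]; exact ⟨hfl, hcl⟩
  have hrest : ∀ l ∉ fracCoords z, (z + t • pipageDir g j k) l = z l := fun l hl =>
    hwl l (ne_of_mem_of_not_mem hj hl).symm (ne_of_mem_of_not_mem hk hl).symm
  rcases min_choice ((⌈z j⌉ - z j) / g k) ((z k - ⌊z k⌋) / g j) with h | h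
  · refine card_fracCoords_lt hj ⟨⌈z j⌉, ?_⟩ hrest
    rw [hwj, show t = _ from h, div_mul_cancel₀ _ hgk.ne']
    ring
  · refine card_fracCoords_lt hk ⟨⌊z k⌋, ?_⟩ hrest
    rw [hwk, show t = _ from h, div_mul_cancel₀ _ hgj.ne']
    ring

/-- Rounding the last fractional coordinate changes `dotp g` by less than `s`. -/
lemma mem_convexHull_of_fracCoords_eq_singleton {g : Fin n → ℝ} {r s : ℝ} {k : Fin n}
    (hgk : 0 ≤ g k ∧ g k ≤ s) {lo hi : Fin n → ℤ} {z : Fin n → ℝ} (hz : z ∈ intBox lo hi)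
    (hgz : r + s ≤ dotp g z) (hsingle : fracCoords z = {k}) :
    z ∈ convexHull ℝ {ζ | isIntPt ζ ∧ ζ ∈ intBox lo hi ∧ r ≤ dotp g ζ} := by
  have hk : k ∈ fracCoords z := hsingle ▸ mem_singleton_self k
  have hround : ∀ m : ℤ, (m = ⌊z k⌋ ∨ m = ⌈z k⌉) → r ≤ dotp g (Function.update z k m) →
      Function.update z k (m : ℝ) ∈
        convexHull ℝ {ζ | isIntPt ζ ∧ ζ ∈ intBox lo hi ∧ r ≤ dotp g ζ} := by
    intro m hm hgm
    have hw := isPartialRounding_update hk hm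
    have hwint := hw.2
    rw [hsingle, card_singleton, Nat.lt_one_iff, card_eq_zero,
      ← isIntPt_iff_fracCoords_eq_empty] at hwint
    exact subset_convexHull ℝ _ ⟨hwint, hw.mem_intBox hz, hgm⟩
  have hfrac : z k - ⌊z k⌋ ≤ 1 := (Int.self_sub_floor (z k)).trans_le (Int.fract_lt_one _).le
  have hceil := Int.le_ceil (z k)
  refine mem_convexHull_of_update_floor_ceil hk (hround _ (.inl rfl) ?_) (hround _ (.inr rfl) ?_)
    <;> rw [dotp_update] <;> nlinarith

theorem mem_convexHull_of_add_le_dotp {g : Fin n → ℝ} {r s : ℝ} (hs : 0 ≤ s)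
    (hg : ∀ j, 0 ≤ g j ∧ g j ≤ s) {lo hi : Fin n → ℤ} {z : Fin n → ℝ}
    (hz : z ∈ intBox lo hi) (hgz : r + s ≤ dotp g z) :
    z ∈ convexHull ℝ {ζ | isIntPt ζ ∧ ζ ∈ intBox lo hi ∧ r ≤ dotp g ζ} := by
  set V := {ζ | isIntPt ζ ∧ ζ ∈ intBox lo hi ∧ r ≤ dotp g ζ}
  induction hN : #(fracCoords z) using Nat.strong_induction_on generalizing z with
  | _ N ih =>
  have step : ∀ w, IsPartialRounding z w → dotp g w = dotp g z → w ∈ convexHull ℝ V :=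
    fun w hw hgw => ih _ (hN ▸ hw.2) (hw.mem_intBox hz) (hgw ▸ hgz) rfl
  by_cases hint : isIntPt z
  · exact subset_convexHull ℝ V ⟨hint, hz, by linarith⟩
  obtain ⟨k, hk⟩ : (fracCoords z).Nonempty :=
    nonempty_iff_ne_empty.2 (mt isIntPt_iff_fracCoords_eq_empty.2 hint)
  by_cases hzero : ∃ l ∈ fracCoords z, g l = 0
  · obtain ⟨l, hl, hgl⟩ := hzero
    refine mem_convexHull_of_update_floor_ceil hl
      (step _ (isPartialRounding_update hl (.inl rfl)) ?_)
      (step _ (isPartialRounding_update hl (.inr rfl)) ?_) <;> simp [dotp_update, hgl]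
  push Not at hzero
  by_cases hsingle : fracCoords z = {k}
  · exact mem_convexHull_of_fracCoords_eq_singleton (hg k) hz hgz hsingle
  obtain ⟨j, hj, hjk⟩ : ∃ j ∈ fracCoords z, j ≠ k := by
    by_contra! h
    exact hsingle (eq_singleton_iff_unique_mem.2 ⟨hk, h⟩)
  have hgj := (hg j).1.lt_of_ne' (hzero j hj)
  have hgk := (hg k).1.lt_of_ne' (hzero k hk)
  have hforth := isPartialRounding_pipage hj hk hjk hgj hgk
  have hback := isPartialRounding_pipage hk hj hjk.symm hgk hgj
  rw [pipageDir_swap, smul_neg, ← neg_smul] at hback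
  exact (convex_convexHull ℝ V).mem_of_add_smul_mem (neg_lt_zero.2 (pipageLen_pos hk hj hgk hgj))
    (pipageLen_pos hj hk hgj hgk)
    (step _ hback (by rw [dotp_add_smul, dotp_pipageDir, mul_zero, add_zero]))
    (step _ hforth (by rw [dotp_add_smul, dotp_pipageDir, mul_zero, add_zero]))

end Pipage

lemma le_sum_min_mul_of_le {ι : Type*} {T : Finset ι} {a x : ι → ℝ} {ρ R : ℝ}
    (ha : ∀ j ∈ T, 0 ≤ a j) (hx : ∀ j ∈ T, 0 ≤ x j) (hρ : 0 < ρ) (hρR : ρ ≤ R)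
    (hR : R ≤ ∑ j ∈ T, min (a j) R * x j) : ρ ≤ ∑ j ∈ T, min (a j) ρ * x j := by
  have hR0 : 0 < R := hρ.trans_le hρR
  calc ρ = ρ / R * R := by field_simp
    _ ≤ ρ / R * ∑ j ∈ T, min (a j) R * x j := by gcongr
    _ = ∑ j ∈ T, min (ρ / R * a j) ρ * x j := by
      rw [mul_sum]
      refine sum_congr rfl fun j _ => ?_
      rw [← mul_assoc, mul_min_of_nonneg _ _ (by positivity), div_mul_cancel₀ _ hR0.ne']
    _ ≤ ∑ j ∈ T, min (a j) ρ * x j := by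
      gcongr with j hj
      · exact hx j hj
      · exact mul_le_of_le_one_left (ha j hj) ((div_le_one hR0).2 hρR)

lemma sum_mul_le_sum_min_sum_mul {ι κ : Type*} [Fintype ι] {T : Finset κ} {a : ι → κ → ℝ}
    {R lam : ι → ℝ} {x : κ → ℝ} (hlam : ∀ i, 0 ≤ lam i) (hx : ∀ j ∈ T, 0 ≤ x j)
    (hR : ∀ i, R i ≤ ∑ j ∈ T, min (a i j) (R i) * x j) :
    ∑ i, lam i * R i ≤ ∑ j ∈ T, min (∑ i, lam i * a i j) (∑ i, lam i * R i) * x j :=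
  calc ∑ i, lam i * R i ≤ ∑ i, lam i * ∑ j ∈ T, min (a i j) (R i) * x j :=
        sum_le_sum fun i _ => mul_le_mul_of_nonneg_left (hR i) (hlam i)
    _ = ∑ j ∈ T, (∑ i, lam i * min (a i j) (R i)) * x j := by
        simp only [mul_sum, sum_mul, mul_assoc]
        exact sum_comm
    _ ≤ _ := by
        gcongr with j hj i
        · exact hx j hj
        · exact le_min (sum_le_sum fun i _ => mul_le_mul_of_nonneg_left (min_le_left _ _) (hlam i))
            (sum_le_sum fun i _ => mul_le_mul_of_nonneg_left (min_le_right _ _) (hlam i))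

section KnapsackCover

variable {n : ℕ}

def kcResidual (a : Fin n → ℝ) (β : ℝ) (u : Fin n → ℝ) (S : Finset (Fin n)) : ℝ :=
  β - ∑ j ∈ S, a j * u j

def SatisfiesKC (a : Fin n → ℝ) (β : ℝ) (u : Fin n → ℝ) (S : Finset (Fin n))
    (x : Fin n → ℝ) : Prop :=
  0 < kcResidual a β u S →
    kcResidual a β u S ≤ ∑ j ∈ univ \ S, min (a j) (kcResidual a β u S) * x j

lemma SatisfiesKC.max_le_sum {a u x : Fin n → ℝ} {β : ℝ} {S : Finset (Fin n)}
    (ha : ∀ j, 0 ≤ a j) (hx : ∀ j, 0 ≤ x j) (hkc : SatisfiesKC a β u S x) :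
    max (kcResidual a β u S) 0
      ≤ ∑ j ∈ univ \ S, min (a j) (max (kcResidual a β u S) 0) * x j := by
  rcases lt_or_ge 0 (kcResidual a β u S) with h | h
  · rw [max_eq_left h.le]
    exact hkc h
  · rw [max_eq_right h]
    exact sum_nonneg fun j _ => mul_nonneg (le_min (ha j) le_rfl) (hx j)

lemma kcResidual_aggregate {ι : Type*} [Fintype ι] (a : ι → Fin n → ℝ) (β lam : ι → ℝ)
    (u : Fin n → ℝ) (S : Finset (Fin n)) :
    kcResidual (fun j => ∑ i, lam i * a i j) (∑ i, lam i * β i) u S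
      = ∑ i, lam i * kcResidual (a i) (β i) u S := by
  simp only [kcResidual, mul_sub, sum_sub_distrib, mul_sum, sum_mul, mul_assoc]
  rw [sum_comm]

/-- The residuals `max r 0` of the rows aggregate to at least the residual of the aggregated row,
and the KC inequality with a smaller residual is weaker. -/
theorem SatisfiesKC.aggregate {ι : Type*} [Fintype ι] {a : ι → Fin n → ℝ} {β : ι → ℝ}
    {u x : Fin n → ℝ} {S : Finset (Fin n)} (ha : ∀ i j, 0 ≤ a i j) (hx : ∀ j, 0 ≤ x j)
    (hkc : ∀ i, SatisfiesKC (a i) (β i) u S x) {lam : ι → ℝ} (hlam : ∀ i, 0 ≤ lam i) :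
    SatisfiesKC (fun j => ∑ i, lam i * a i j) (∑ i, lam i * β i) u S x := by
  intro hr
  refine le_sum_min_mul_of_le (fun j _ => sum_nonneg fun i _ => mul_nonneg (hlam i) (ha i j))
    (fun j _ => hx j) hr ?_ (sum_mul_le_sum_min_sum_mul hlam (fun j _ => hx j)
      fun i => (hkc i).max_le_sum (ha i) hx)
  rw [kcResidual_aggregate]
  exact sum_le_sum fun i _ => mul_le_mul_of_nonneg_left (le_max_left _ _) (hlam i)

lemma dotp_ite_mem (S : Finset (Fin n)) (f ζ : Fin n → ℝ) :
    dotp (fun j => if j ∈ S then 0 else f j) ζ = ∑ j ∈ univ \ S, f j * ζ j := by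
  simp only [dotp, ite_mul, zero_mul, sum_ite, sum_const_zero, zero_add, sdiff_eq_filter]

def truncDouble (J : Finset (Fin n)) (u x : Fin n → ℝ) : Fin n → ℝ :=
  fun j => if j ∈ J then min (2 * x j) (u j) else 2 * x j

noncomputable def truncSet (J : Finset (Fin n)) (u x : Fin n → ℝ) : Finset (Fin n) :=
  J.filter fun j => u j ≤ 2 * x j

section TruncDouble

variable {J : Finset (Fin n)} {u x : Fin n → ℝ}

lemma truncDouble_le_two_mul (j : Fin n) : truncDouble J u x j ≤ 2 * x j := by
  unfold truncDouble
  split_ifs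
  exacts [min_le_left _ _, le_rfl]

lemma dotp_truncDouble_le {c : Fin n → ℝ} (hc : ∀ j, 0 ≤ c j) :
    dotp c (truncDouble J u x) ≤ 2 * dotp c x := by
  rw [dotp, dotp, mul_sum]
  exact sum_le_sum fun j _ =>
    (mul_le_mul_of_nonneg_left (truncDouble_le_two_mul j) (hc j)).trans_eq (mul_left_comm _ _ _)

lemma truncDouble_of_mem_truncSet {j : Fin n} (hj : j ∈ truncSet J u x) :
    truncDouble J u x j = u j := by
  obtain ⟨hjJ, hj⟩ := mem_filter.1 hj
  simp only [truncDouble, if_pos hjJ, min_eq_right hj]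

lemma truncDouble_of_notMem_truncSet {j : Fin n} (hj : j ∉ truncSet J u x) :
    truncDouble J u x j = 2 * x j := by
  by_cases hjJ : j ∈ J
  · have : 2 * x j < u j := lt_of_not_ge fun h => hj (mem_filter.2 ⟨hjJ, h⟩)
    simp only [truncDouble, if_pos hjJ, min_eq_left this.le]
  · simp only [truncDouble, if_neg hjJ]

lemma truncDouble_nonneg (hu : ∀ j ∈ J, ∃ z : ℕ, u j = z) (hx : ∀ j, 0 ≤ x j) (j : Fin n) :
    0 ≤ truncDouble J u x j := by
  by_cases hjJ : j ∈ J
  · obtain ⟨N, hN⟩ := hu j hjJ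
    simp only [truncDouble, if_pos hjJ, hN]
    exact le_min (by linarith [hx j]) N.cast_nonneg
  · simp only [truncDouble, if_neg hjJ]
    linarith [hx j]

lemma le_of_mem_intBox_truncDouble (hu : ∀ j ∈ J, ∃ z : ℕ, u j = z) {ζ : Fin n → ℝ}
    (hζ : ζ ∈ intBox (fun j => ⌊truncDouble J u x j⌋) (fun j => ⌈truncDouble J u x j⌉))
    {j : Fin n} (hj : j ∈ J) : ζ j ≤ u j := by
  obtain ⟨N, hN⟩ := hu j hj
  have hyN : truncDouble J u x j ≤ ((N : ℤ) : ℝ) := by simp [truncDouble, hj, hN]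
  have hceil : (⌈truncDouble J u x j⌉ : ℝ) ≤ N := by exact_mod_cast Int.ceil_le.2 hyN
  exact hN ▸ (hζ j).2.trans hceil

lemma eq_of_mem_intBox_truncDouble (hu : ∀ j ∈ J, ∃ z : ℕ, u j = z) {ζ : Fin n → ℝ}
    (hζ : ζ ∈ intBox (fun j => ⌊truncDouble J u x j⌋) (fun j => ⌈truncDouble J u x j⌉))
    {j : Fin n} (hj : j ∈ truncSet J u x) : ζ j = u j := by
  have hjJ := (mem_filter.1 hj).1
  obtain ⟨N, hN⟩ := hu j hjJ
  have hfloor : (⌊truncDouble J u x j⌋ : ℝ) ≤ ζ j := (hζ j).1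
  rw [truncDouble_of_mem_truncSet hj, hN, Int.floor_natCast, Int.cast_natCast, ← hN] at hfloor
  exact (le_of_mem_intBox_truncDouble hu hζ hjJ).antisymm hfloor

/-- With `S = truncSet` and `ρ` the nonnegative part of its residual, the KC inequality for `S`
gives `g ⬝ y ≥ 2ρ` for `y = truncDouble` and `g = min a ρ` off `S`. Pipage rounding then writes
`y` as a convex combination of integral points `ζ` of its cell with `g ⬝ ζ ≥ ρ`, and these
satisfy `a ⬝ ζ ≥ β` because `ζ = u` on `S`. -/
theorem truncDouble_mem_convexHull {a : Fin n → ℝ} {β : ℝ}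
    (hu : ∀ j ∈ J, ∃ z : ℕ, u j = z) (ha : ∀ j, 0 ≤ a j) (hx : ∀ j, 0 ≤ x j)
    (hkc : ∀ S ⊆ J, SatisfiesKC a β u S x) :
    truncDouble J u x ∈ convexHull ℝ
      {z | (∀ j, 0 ≤ z j) ∧ isIntPt z ∧ (∀ j ∈ J, z j ≤ u j) ∧ β ≤ dotp a z} := by
  set S := truncSet J u x
  set ρ := max (kcResidual a β u S) 0
  set g : Fin n → ℝ := fun j => if j ∈ S then 0 else min (a j) ρ
  have hg : ∀ j, 0 ≤ g j ∧ g j ≤ ρ := fun j => by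
    simp only [g]
    split_ifs
    exacts [⟨le_rfl, le_max_right _ _⟩, ⟨le_min (ha j) (le_max_right _ _), min_le_right _ _⟩]
  have hgy : ρ + ρ ≤ dotp g (truncDouble J u x) := by
    have hS := (hkc S (filter_subset _ _)).max_le_sum ha hx
    rw [dotp_ite_mem, sum_congr rfl fun j hj => by
      rw [truncDouble_of_notMem_truncSet (mem_sdiff.1 hj).2, mul_left_comm], ← mul_sum]
    linarith
  refine convexHull_mono ?_ (mem_convexHull_of_add_le_dotp (le_max_right _ 0) hg
    (fun j => ⟨Int.floor_le _, Int.le_ceil _⟩) hgy)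
  rintro ζ ⟨hint, hζ, hgζ⟩
  have hζ0 : ∀ j, 0 ≤ ζ j := fun j =>
    (Int.cast_nonneg (Int.floor_nonneg.2 (truncDouble_nonneg hu hx j))).trans (hζ j).1
  refine ⟨hζ0, hint, fun j hj => le_of_mem_intBox_truncDouble hu hζ hj, ?_⟩
  calc β = kcResidual a β u S + ∑ j ∈ S, a j * u j := by rw [kcResidual]; ring
    _ ≤ dotp g ζ + ∑ j ∈ S, a j * ζ j :=
      add_le_add ((le_max_left _ _).trans hgζ)
        (sum_congr rfl fun j hj => by rw [eq_of_mem_intBox_truncDouble hu hζ hj]).le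
    _ ≤ dotp a ζ := by
      rw [dotp_ite_mem, dotp, ← sum_sdiff (subset_univ S)]
      gcongr with j hj
      · exact hζ0 j
      · exact min_le_left _ _

end TruncDouble

end KnapsackCover
theorem stmt17_general {n m : ℕ} (A : Matrix (Fin m) (Fin n) ℝ) (b : Fin m → ℝ)
    (J : Finset (Fin n)) (u : Fin n → ℝ)
    (hA : ∀ i j, 0 ≤ A i j)
    (hu : ∀ j ∈ J, ∃ z : ℕ, u j = (z : ℝ))
    (c : Fin n → ℝ) (hc : ∀ j, 0 ≤ c j) :
    ((1 / 2 : ℝ) : EReal) * infVal c (aggC A b J u) ≤ infVal c (kcClosure A b J u) := by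
  refine le_iInf₂ fun x hx => ?_
  have hx0 : ∀ j, 0 ≤ x j := hx.1.1
  have hy : truncDouble J u x ∈ aggC A b J u := Set.mem_iInter.2 fun lam =>
    truncDouble_mem_convexHull hu
      (fun j => sum_nonneg fun i _ => mul_nonneg (lam.2 i) (hA i j)) hx0
      fun S hS => SatisfiesKC.aggregate hA hx0 (fun i => hx.2 i S hS) lam.2
  have hcy : dotp c (truncDouble J u x) ≤ 2 * dotp c x := dotp_truncDouble_le hc
  calc ((1 / 2 : ℝ) : EReal) * infVal c (aggC A b J u)
      ≤ ((1 / 2 : ℝ) : EReal) * (dotp c (truncDouble J u x) : EReal) :=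
        mul_le_mul_of_nonneg_left (iInf₂_le _ hy) (by norm_num)
    _ = ((1 / 2 * dotp c (truncDouble J u x) : ℝ) : EReal) := (EReal.coe_mul _ _).symm
    _ ≤ dotp c x := EReal.coe_le_coe_iff.2 (by linarith)

/-- For a covering polyhedron with bounds
`Q = {x : 0 ≤ x ≤ u, Ax ≥ b}` (bounds on coordinates in `J`), the knapsack-cover closure
`KC(Q)` is a 2-approximation of the aggregation closure `𝒜(Q)`. -/
theorem stmt17 {n m : ℕ} (A : Matrix (Fin m) (Fin n) ℝ) (b : Fin m → ℝ)
    (J : Finset (Fin n)) (u : Fin n → ℝ)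
    (hA : ∀ i j, 0 ≤ A i j) (hb : ∀ i, 0 ≤ b i)
    (hAq : ∀ i j, ∃ q : ℚ, A i j = (q : ℝ)) (hbq : ∀ i, ∃ q : ℚ, b i = (q : ℝ))
    (hu : ∀ j ∈ J, ∃ z : ℕ, u j = (z : ℝ))
    (c : Fin n → ℝ) (hc : ∀ j, 0 ≤ c j) :
    ((1 / 2 : ℝ) : EReal) * infVal c (aggC A b J u) ≤ infVal c (kcClosure A b J u) :=
  stmt17_general A b J u hA hu c hc
end
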